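/- For the symplectic Euler map with 0 < hω < 2, write cos θ = 1 - h²ω²/2; then the eigenvalues of the update matrix are e^{±iθ}, and A is conjugate over ℝ to a rotation by angle θ, so all iterates Aᵏ have uniformly bounded norm. -/
import Mathlib

open Matrix

lemma rot_mul_aux (a b : ℝ) :
    (!![Real.cos a, -Real.sin a; Real.sin a, Real.cos a] : Matrix (Fin 2) (Fin 2) ℝ) *
      !![Real.cos b, -Real.sin b; Real.sin b, Real.cos b]
      = !![Real.cos (a+b), -Real.sin (a+b); Real.sin (a+b), Real.cos (a+b)] := by
  ext i j
  fin_cases i <;> fin_cases j <;>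
    simp [Matrix.mul_apply, Fin.sum_univ_two, Real.cos_add, Real.sin_add] <;> ring

lemma rot_pow_aux (θ : ℝ) (k : ℕ) :
    (!![Real.cos θ, -Real.sin θ; Real.sin θ, Real.cos θ] : Matrix (Fin 2) (Fin 2) ℝ) ^ k
      = !![Real.cos (k*θ), -Real.sin (k*θ); Real.sin (k*θ), Real.cos (k*θ)] := by
  induction k with
  | zero => simp [Matrix.one_fin_two]
  | succ n ih =>
    have hcast : ((n+1 : ℕ) : ℝ) * θ = n*θ + θ := by push_cast; ring
    rw [pow_succ, ih, rot_mul_aux, hcast]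

lemma spec_aux (h ω : ℝ) (lam : ℂ)
    (hlam : lam^2 - (2 - (h:ℂ)^2*(ω:ℂ)^2)*lam + 1 = 0) :
    lam ∈ spectrum ℂ ((!![1 - h^2*ω^2, h; -(h*ω^2), 1] : Matrix (Fin 2) (Fin 2) ℝ).map Complex.ofReal) := by
  rw [spectrum.mem_iff]
  intro hu
  rw [Matrix.isUnit_iff_isUnit_det] at hu
  have heq : algebraMap ℂ (Matrix (Fin 2) (Fin 2) ℂ) lam -
      ((!![1 - h^2*ω^2, h; -(h*ω^2), 1] : Matrix (Fin 2) (Fin 2) ℝ).map Complex.ofReal)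
      = !![lam - (1 - (h:ℂ)^2*(ω:ℂ)^2), -(h:ℂ); (h:ℂ)*(ω:ℂ)^2, lam - 1] := by
    ext i j
    fin_cases i <;> fin_cases j <;>
      simp [Matrix.algebraMap_matrix_apply] <;> push_cast <;> ring
  rw [heq, Matrix.det_fin_two_of] at hu
  have hz : (lam - (1 - (h:ℂ)^2*(ω:ℂ)^2)) * (lam - 1) - -(h:ℂ) * ((h:ℂ)*(ω:ℂ)^2) = 0 := by
    linear_combination hlam
  rw [hz] at hu
  exact not_isUnit_zero hu

lemma entry_bound_aux (P Rk Q : Matrix (Fin 2) (Fin 2) ℝ) (hR : ∀ a b, |Rk a b| ≤ 1) (i j : Fin 2) :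
    |(P * Rk * Q) i j| ≤ (|P i 0| + |P i 1|) * (|Q 0 j| + |Q 1 j|) := by
  have e : (P * Rk * Q) i j = P i 0 * Rk 0 0 * Q 0 j + P i 0 * Rk 0 1 * Q 1 j
      + P i 1 * Rk 1 0 * Q 0 j + P i 1 * Rk 1 1 * Q 1 j := by
    simp [Matrix.mul_apply, Fin.sum_univ_two]; ring
  rw [e]
  have b : ∀ (a b : Fin 2), |P i a * Rk a b * Q b j| ≤ |P i a| * |Q b j| := by
    intro a b
    rw [abs_mul, abs_mul]
    have h0 := hR a b
    have h1 := abs_nonneg (P i a); have h2 := abs_nonneg (Q b j); have h3 := abs_nonneg (Rk a b)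
    nlinarith [mul_nonneg (mul_nonneg h1 h2) (by linarith : (0:ℝ) ≤ 1 - |Rk a b|)]
  have b00 := abs_le.mp (b 0 0); have b01 := abs_le.mp (b 0 1)
  have b10 := abs_le.mp (b 1 0); have b11 := abs_le.mp (b 1 1)
  rw [abs_le]
  constructor <;> nlinarith [b00.1, b00.2, b01.1, b01.2, b10.1, b10.2, b11.1, b11.2]

theorem stmt_18 (h ω : ℝ) (h1 : 0 < h * ω) (h2 : h * ω < 2)
    (θ : ℝ) (hθ : Real.cos θ = 1 - h^2*ω^2/2) :
    (Complex.exp (θ * Complex.I) ∈ spectrum ℂ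
      ((!![1 - h^2*ω^2, h; -(h*ω^2), 1] : Matrix (Fin 2) (Fin 2) ℝ).map
        Complex.ofReal)) ∧
    (Complex.exp (-(θ * Complex.I)) ∈ spectrum ℂ
      ((!![1 - h^2*ω^2, h; -(h*ω^2), 1] : Matrix (Fin 2) (Fin 2) ℝ).map
        Complex.ofReal)) ∧
    (∃ P : Matrix (Fin 2) (Fin 2) ℝ, IsUnit P.det ∧
      (!![1 - h^2*ω^2, h; -(h*ω^2), 1] : Matrix (Fin 2) (Fin 2) ℝ)
        = P * !![Real.cos θ, -Real.sin θ; Real.sin θ, Real.cos θ] * P⁻¹) ∧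
    (∃ C : ℝ, ∀ (k : ℕ) (i j : Fin 2),
      |((!![1 - h^2*ω^2, h; -(h*ω^2), 1] : Matrix (Fin 2) (Fin 2) ℝ) ^ k) i j| ≤ C) := by
  have hh : h ≠ 0 := by
    intro h0; rw [h0] at h1; simp at h1
  have hωne : ω ≠ 0 := by
    intro h0; rw [h0] at h1; simp at h1
  -- basic identities
  have hc : h^2*ω^2 = 2 - 2*Real.cos θ := by rw [hθ]; ring
  have hs2 : Real.sin θ^2 = 1 - Real.cos θ^2 := by
    nlinarith [Real.sin_sq_add_cos_sq θ]
  have hclt : Real.cos θ^2 < 1 := by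
    rw [hθ]
    nlinarith [mul_pos (mul_pos h1 h1)
      (mul_pos (show (0:ℝ) < 2 - h*ω by linarith) (show (0:ℝ) < 2 + h*ω by linarith))]
  have hsne : Real.sin θ ≠ 0 := by
    intro h0; rw [h0] at hs2; nlinarith
  -- exponential facts
  have hexp : Complex.exp ((θ:ℂ) * Complex.I) * Complex.exp (-((θ:ℂ) * Complex.I)) = 1 := by
    rw [← Complex.exp_add]; simp
  have hsum : Complex.exp ((θ:ℂ) * Complex.I) + Complex.exp (-((θ:ℂ) * Complex.I))
      = 2 - (h:ℂ)^2*(ω:ℂ)^2 := by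
    have e1 : Complex.exp ((θ:ℂ) * Complex.I) = Complex.cos θ + Complex.sin θ * Complex.I :=
      Complex.exp_mul_I _
    have e2 : Complex.exp (-((θ:ℂ) * Complex.I)) = Complex.cos θ - Complex.sin θ * Complex.I := by
      rw [show -((θ:ℂ)*Complex.I) = (-(θ:ℂ))*Complex.I by ring, Complex.exp_mul_I,
        Complex.cos_neg, Complex.sin_neg]; ring
    rw [e1, e2]
    have e3 : Complex.cos θ = ((1 - h^2*ω^2/2 : ℝ) : ℂ) := by rw [← Complex.ofReal_cos, hθ]
    rw [e3]; push_cast; ring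
  -- the conjugating matrix
  set R : Matrix (Fin 2) (Fin 2) ℝ := !![Real.cos θ, -Real.sin θ; Real.sin θ, Real.cos θ] with hR
  set P : Matrix (Fin 2) (Fin 2) ℝ := !![Real.sin θ, Real.cos θ - 1; 0, -(h*ω^2)] with hP
  have hPu : IsUnit P.det := by
    rw [hP, Matrix.det_fin_two_of]
    apply isUnit_iff_ne_zero.mpr
    simp only [mul_zero, sub_zero]
    intro hz
    rcases mul_eq_zero.mp hz with h' | h'
    · exact hsne h'
    · exact mul_ne_zero hh (pow_ne_zero 2 hωne) (by linarith [neg_eq_zero.mp h'])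
  have hAP : (!![1 - h^2*ω^2, h; -(h*ω^2), 1] : Matrix (Fin 2) (Fin 2) ℝ) * P = P * R := by
    rw [hP, hR]
    ext i j
    fin_cases i <;> fin_cases j <;>
      simp [Matrix.mul_apply, Fin.sum_univ_two]
    · linear_combination (-Real.sin θ) * hc
    · linear_combination (-Real.cos θ) * hc + hs2
    · ring
  have hA : (!![1 - h^2*ω^2, h; -(h*ω^2), 1] : Matrix (Fin 2) (Fin 2) ℝ) = P * R * P⁻¹ := by
    calc (!![1 - h^2*ω^2, h; -(h*ω^2), 1] : Matrix (Fin 2) (Fin 2) ℝ)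
        = !![1 - h^2*ω^2, h; -(h*ω^2), 1] * (P * P⁻¹) := by
          rw [Matrix.mul_nonsing_inv P hPu, mul_one]
      _ = (!![1 - h^2*ω^2, h; -(h*ω^2), 1] * P) * P⁻¹ := by rw [Matrix.mul_assoc]
      _ = P * R * P⁻¹ := by rw [hAP]
  have hAk : ∀ k : ℕ, (!![1 - h^2*ω^2, h; -(h*ω^2), 1] : Matrix (Fin 2) (Fin 2) ℝ) ^ k
      = P * R ^ k * P⁻¹ := by
    intro k
    induction k with
    | zero => simp [Matrix.mul_nonsing_inv P hPu]
    | succ n ih =>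
      rw [pow_succ, ih, hA, pow_succ]
      simp only [Matrix.mul_assoc]
      rw [Matrix.nonsing_inv_mul_cancel_left P _ hPu]
  refine ⟨?_, ?_, ⟨P, hPu, hA⟩, ?_⟩
  · exact spec_aux h ω _ (by linear_combination Complex.exp ((θ:ℂ) * Complex.I) * hsum - hexp)
  · exact spec_aux h ω _ (by linear_combination Complex.exp (-((θ:ℂ) * Complex.I)) * hsum - hexp)
  · refine ⟨(|P 0 0| + |P 0 1| + |P 1 0| + |P 1 1|) *
      (|P⁻¹ 0 0| + |P⁻¹ 0 1| + |P⁻¹ 1 0| + |P⁻¹ 1 1|), ?_⟩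
    intro k i j
    rw [hAk k, hR, rot_pow_aux]
    refine le_trans (entry_bound_aux _ _ _ ?_ i j) ?_
    · intro a b
      fin_cases a <;> fin_cases b <;>
        simp [abs_neg, Real.abs_cos_le_one, Real.abs_sin_le_one]
    · refine mul_le_mul ?_ ?_ (by positivity) (by positivity)
      · fin_cases i <;>
          simp only [Fin.isValue, Fin.mk_zero, Fin.mk_one] <;>
          linarith [abs_nonneg (P 0 0), abs_nonneg (P 0 1), abs_nonneg (P 1 0), abs_nonneg (P 1 1)]
      · fin_cases j <;>
          simp only [Fin.isValue, Fin.mk_zero, Fin.mk_one] <;>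
          linarith [abs_nonneg (P⁻¹ 0 0), abs_nonneg (P⁻¹ 0 1), abs_nonneg (P⁻¹ 1 0),
            abs_nonneg (P⁻¹ 1 1)]
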